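/- The time-change function T satisfies T(0) = 0 and T is differentiable on [0,τ*) with T'(τ) = F(τ)² for every τ ∈ [0,τ*). -/

import Mathlib

/-!
For `0 ≤ τ` with `1 + τ x > 0` and `1 + τ y > 0`, the kernel is a primitive in `τ`:
`K_τ(x, y) = ∫₀^τ ds / ((1 + s x)(1 + s y))`. Integrating over `Q × Q` and using Fubini, the
inner double integral factorises, so `T(τ) = ∫₀^τ F(s)² ds`. On `[0, η]` with `1 + η m₀ > 0`
the integrand of `F` is bounded by `(1 + η m₀)⁻¹`, so `F` is continuous by dominated convergence,
and the fundamental theorem of calculus gives `T' = F²`.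
-/

open MeasureTheory Real Set Filter Topology

noncomputable def timeChangeKernel (τ x y : ℝ) : ℝ :=
  if x ≠ y then Real.log ((1 + τ * x) / (1 + τ * y)) / (x - y) else τ / (1 + τ * x)

/-- For `μ` the restriction of Lebesgue measure to `Q`, `F = resolventIntegral μ φ₀ / |Q|`. -/
noncomputable def resolventIntegral {α : Type*} [MeasurableSpace α] (μ : Measure α)
    (φ : α → ℝ) (s : ℝ) : ℝ :=
  ∫ a, (1 + s * φ a)⁻¹ ∂μ

lemma one_add_mul_le_one_add_mul {m x s η : ℝ} (hmx : m ≤ x) (hm : m ≤ 0) (hs : 0 ≤ s)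
    (hsη : s ≤ η) : 1 + η * m ≤ 1 + s * x := by
  nlinarith

lemma norm_inv_one_add_mul_le {m x s η : ℝ} (hmx : m ≤ x) (hm : m ≤ 0) (hs : 0 ≤ s)
    (hsη : s ≤ η) (hη : 0 < 1 + η * m) : ‖(1 + s * x)⁻¹‖ ≤ (1 + η * m)⁻¹ := by
  have h := one_add_mul_le_one_add_mul hmx hm hs hsη
  rw [norm_inv, Real.norm_of_nonneg (hη.le.trans h)]
  exact inv_anti₀ hη h

lemma one_add_mul_pos_of_lt_neg_one_div {m τ : ℝ} (hm : m < 0) (hτ : τ < -1 / m) :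
    0 < 1 + τ * m := by
  linarith [(lt_div_iff_of_neg hm).1 hτ]

lemma hasDerivAt_timeChangeKernel {x y s : ℝ} (hx : 0 < 1 + s * x) (hy : 0 < 1 + s * y) :
    HasDerivAt (fun t => timeChangeKernel t x y) ((1 + s * x)⁻¹ * (1 + s * y)⁻¹) s := by
  have hlin : ∀ z : ℝ, HasDerivAt (fun t => 1 + t * z) z s := fun z => by
    simpa using ((hasDerivAt_id s).mul_const z).const_add 1
  unfold timeChangeKernel
  by_cases hxy : x = y
  · subst hxy
    simp only [ne_eq, not_true_eq_false, if_false]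
    refine ((hasDerivAt_id' s).div (hlin x) hx.ne').congr_deriv ?_
    field_simp
    ring
  · simp only [ne_eq, hxy, not_false_eq_true, if_true]
    refine ((((hlin x).div (hlin y) hy.ne').log (div_pos hx hy).ne').div_const
      (x - y)).congr_deriv ?_
    simp only [Pi.div_apply]
    field_simp [sub_ne_zero.2 hxy]
    ring

lemma timeChangeKernel_eq_integral {x y τ : ℝ} (hτ : 0 ≤ τ) (hx : 0 < 1 + τ * x)
    (hy : 0 < 1 + τ * y) :
    timeChangeKernel τ x y = ∫ s in (0 : ℝ)..τ, (1 + s * x)⁻¹ * (1 + s * y)⁻¹ := by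
  have hpos : ∀ z, 0 < 1 + τ * z → ∀ s ∈ uIcc 0 τ, 0 < 1 + s * z := by
    intro z hz s hs
    rw [uIcc_of_le hτ] at hs
    rcases le_total 0 z with h | h <;> nlinarith [hs.1, hs.2]
  have hcont : ContinuousOn (fun s => (1 + s * x)⁻¹ * (1 + s * y)⁻¹) (uIcc 0 τ) :=
    ((continuousOn_const.add (continuousOn_id.mul continuousOn_const)).inv₀
      fun s hs => (hpos x hx s hs).ne').mul
    ((continuousOn_const.add (continuousOn_id.mul continuousOn_const)).inv₀
      fun s hs => (hpos y hy s hs).ne')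
  rw [intervalIntegral.integral_eq_sub_of_hasDerivAt
    (fun s hs => hasDerivAt_timeChangeKernel (hpos x hx s hs) (hpos y hy s hs))
    hcont.intervalIntegrable]
  simp [timeChangeKernel]

theorem ContinuousOn.hasDerivWithinAt_integral_Ico {E : Type*} [NormedAddCommGroup E]
    [NormedSpace ℝ E] [CompleteSpace E] {g : ℝ → E} {a b τ : ℝ}
    (hg : ContinuousOn g (Ico a b)) (hτ : τ ∈ Ico a b) :
    HasDerivWithinAt (fun t => ∫ s in a..t, g s) (g τ) (Ico a b) τ := by
  obtain ⟨η, hτη, hηb⟩ := exists_between hτ.2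
  have hgη : ContinuousOn g (Icc a η) := hg.mono fun s hs => ⟨hs.1, hs.2.trans_lt hηb⟩
  have : Fact (τ ∈ Icc a η) := ⟨⟨hτ.1, hτη.le⟩⟩
  have hIcc : Icc a η ∈ 𝓝[Ico a b] τ :=
    mem_nhdsWithin.2 ⟨Iio η, isOpen_Iio, hτη, fun s hs => ⟨hs.2.1, hs.1.le⟩⟩
  refine HasDerivWithinAt.mono_of_mem_nhdsWithin ?_ hIcc
  exact intervalIntegral.integral_hasDerivWithinAt_right
    ((hgη.mono (Icc_subset_Icc le_rfl hτη.le)).intervalIntegrable_of_Icc hτ.1)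
    (hgη.stronglyMeasurableAtFilter_nhdsWithin measurableSet_Icc τ) (hgη τ this.out)

section

variable {α : Type*} [MeasurableSpace α] {μ : Measure α} {φ : α → ℝ} {m : ℝ}

lemma aestronglyMeasurable_inv_one_add_mul (hφ : AEStronglyMeasurable φ μ) (s : ℝ) :
    AEStronglyMeasurable (fun a => (1 + s * φ a)⁻¹) μ :=
  (((hφ.aemeasurable.const_mul s).const_add 1).inv).aestronglyMeasurable

lemma aestronglyMeasurable_inv_one_add_mul_prod (hφ : AEStronglyMeasurable φ μ) {ν : Measure ℝ} :
    AEStronglyMeasurable (fun p : α × ℝ => (1 + p.2 * φ p.1)⁻¹) (μ.prod ν) :=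
  ((measurable_snd.aemeasurable.mul (hφ.aemeasurable.comp_quasiMeasurePreserving
    Measure.quasiMeasurePreserving_fst)).const_add 1).inv.aestronglyMeasurable

lemma ae_norm_inv_one_add_mul_le_prod (hm : ∀ᵐ a ∂μ, m ≤ φ a) (hm0 : m ≤ 0)
    {τ : ℝ} (hτm : 0 < 1 + τ * m) :
    ∀ᵐ p ∂(μ.prod (volume.restrict (Ioc 0 τ))), ‖(1 + p.2 * φ p.1)⁻¹‖ ≤ (1 + τ * m)⁻¹ := by
  filter_upwards [Measure.quasiMeasurePreserving_fst.ae hm,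
    Measure.quasiMeasurePreserving_snd.ae (ae_restrict_mem measurableSet_Ioc)] with p hp hs
  exact norm_inv_one_add_mul_le hp hm0 hs.1.le hs.2 hτm

variable [IsFiniteMeasure μ]

lemma norm_resolventIntegral_le (hm : ∀ᵐ a ∂μ, m ≤ φ a) (hm0 : m ≤ 0) {s η : ℝ}
    (hs : s ∈ Icc 0 η) (hη : 0 < 1 + η * m) :
    ‖resolventIntegral μ φ s‖ ≤ (1 + η * m)⁻¹ * μ.real univ := by
  apply norm_integral_le_of_norm_le_const
  filter_upwards [hm] with a ha using norm_inv_one_add_mul_le ha hm0 hs.1 hs.2 hη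

lemma continuousOn_resolventIntegral (hφ : AEStronglyMeasurable φ μ)
    (hm : ∀ᵐ a ∂μ, m ≤ φ a) (hm0 : m ≤ 0) {η : ℝ} (hη : 0 < 1 + η * m) :
    ContinuousOn (resolventIntegral μ φ) (Icc 0 η) := by
  refine continuousOn_of_dominated (bound := fun _ => (1 + η * m)⁻¹)
    (fun s _ => aestronglyMeasurable_inv_one_add_mul hφ s)
    (fun s hs => ?_) (integrable_const _) ?_
  · filter_upwards [hm] with a ha using norm_inv_one_add_mul_le ha hm0 hs.1 hs.2 hη
  · filter_upwards [hm] with a ha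
    exact (continuousOn_const.add (continuousOn_id.mul continuousOn_const)).inv₀ fun s hs =>
      (hη.trans_le (one_add_mul_le_one_add_mul ha hm0 hs.1 hs.2)).ne'

lemma continuousOn_resolventIntegral_Ico (hφ : AEStronglyMeasurable φ μ)
    (hm : ∀ᵐ a ∂μ, m ≤ φ a) (hm0 : m < 0) :
    ContinuousOn (resolventIntegral μ φ) (Ico 0 (-1 / m)) := by
  intro τ hτ
  obtain ⟨η, hτη, hηm⟩ := exists_between hτ.2
  have hIcc : Icc 0 η ∈ 𝓝[Ico 0 (-1 / m)] τ :=
    mem_nhdsWithin.2 ⟨Iio η, isOpen_Iio, hτη, fun s hs => ⟨hs.2.1, hs.1.le⟩⟩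
  exact ((continuousOn_resolventIntegral hφ hm hm0.le
    (one_add_mul_pos_of_lt_neg_one_div hm0 hηm)) τ ⟨hτ.1, hτη.le⟩).mono_of_mem_nhdsWithin hIcc

lemma integral_timeChangeKernel (hφ : AEStronglyMeasurable φ μ) (hm : ∀ᵐ a ∂μ, m ≤ φ a)
    (hm0 : m ≤ 0) {x τ : ℝ} (hx : m ≤ x) (hτ : 0 ≤ τ) (hτm : 0 < 1 + τ * m) :
    ∫ b, timeChangeKernel τ x (φ b) ∂μ
      = ∫ s in (0 : ℝ)..τ, (1 + s * x)⁻¹ * resolventIntegral μ φ s := by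
  have hpos : ∀ {y}, m ≤ y → 0 < 1 + τ * y := fun hy =>
    hτm.trans_le (one_add_mul_le_one_add_mul hy hm0 hτ le_rfl)
  have hK : ∀ᵐ b ∂μ, timeChangeKernel τ x (φ b)
      = ∫ s in Ioc 0 τ, (1 + s * x)⁻¹ * (1 + s * φ b)⁻¹ := by
    filter_upwards [hm] with b hb
    rw [timeChangeKernel_eq_integral hτ (hpos hx) (hpos hb), intervalIntegral.integral_of_le hτ]
  have hint : Integrable (fun p : α × ℝ => (1 + p.2 * x)⁻¹ * (1 + p.2 * φ p.1)⁻¹)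
      (μ.prod (volume.restrict (Ioc 0 τ))) := by
    refine .of_bound
      (((measurable_snd.mul_const x).const_add 1).inv.aestronglyMeasurable.mul
        (aestronglyMeasurable_inv_one_add_mul_prod hφ))
      ((1 + τ * m)⁻¹ * (1 + τ * m)⁻¹) ?_
    filter_upwards [ae_norm_inv_one_add_mul_le_prod hm hm0 hτm,
      Measure.quasiMeasurePreserving_snd.ae (ae_restrict_mem measurableSet_Ioc)] with p hp hs
    rw [norm_mul]
    exact mul_le_mul (norm_inv_one_add_mul_le hx hm0 hs.1.le hs.2 hτm) hp (norm_nonneg _)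
      (inv_nonneg.2 hτm.le)
  rw [integral_congr_ae hK, integral_integral_swap hint, intervalIntegral.integral_of_le hτ]
  simp only [integral_const_mul, resolventIntegral]

theorem integral_integral_timeChangeKernel (hφ : AEStronglyMeasurable φ μ)
    (hm : ∀ᵐ a ∂μ, m ≤ φ a) (hm0 : m ≤ 0) {τ : ℝ} (hτ : 0 ≤ τ) (hτm : 0 < 1 + τ * m) :
    ∫ a, ∫ b, timeChangeKernel τ (φ a) (φ b) ∂μ ∂μ
      = ∫ s in (0 : ℝ)..τ, resolventIntegral μ φ s ^ 2 := by
  have hI : AEStronglyMeasurable (resolventIntegral μ φ) (volume.restrict (Ioc 0 τ)) :=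
    ((continuousOn_resolventIntegral hφ hm hm0 hτm).mono
      Ioc_subset_Icc_self).aestronglyMeasurable measurableSet_Ioc
  have hint : Integrable (fun p : α × ℝ => (1 + p.2 * φ p.1)⁻¹ * resolventIntegral μ φ p.2)
      (μ.prod (volume.restrict (Ioc 0 τ))) := by
    refine .of_bound ((aestronglyMeasurable_inv_one_add_mul_prod hφ).mul
        (hI.comp_quasiMeasurePreserving Measure.quasiMeasurePreserving_snd))
      ((1 + τ * m)⁻¹ * ((1 + τ * m)⁻¹ * μ.real univ)) ?_
    filter_upwards [ae_norm_inv_one_add_mul_le_prod hm hm0 hτm,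
      Measure.quasiMeasurePreserving_snd.ae (ae_restrict_mem measurableSet_Ioc)] with p hp hs
    rw [norm_mul]
    exact mul_le_mul hp (norm_resolventIntegral_le hm hm0 ⟨hs.1.le, hs.2⟩ hτm) (norm_nonneg _)
      (inv_nonneg.2 hτm.le)
  have hinner : ∀ᵐ a ∂μ, ∫ b, timeChangeKernel τ (φ a) (φ b) ∂μ
      = ∫ s in Ioc 0 τ, (1 + s * φ a)⁻¹ * resolventIntegral μ φ s := by
    filter_upwards [hm] with a ha
    rw [integral_timeChangeKernel hφ hm hm0 ha hτ hτm, intervalIntegral.integral_of_le hτ]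
  rw [integral_congr_ae hinner, integral_integral_swap hint, intervalIntegral.integral_of_le hτ]
  simp only [integral_mul_const, resolventIntegral, sq]

end

theorem stmt_4_general
    (L : ℝ)
    (Q : Set (ℝ × ℝ)) (hQ : Q = Set.Icc (0, 0) (L, L))
    (φ₀ : ℝ × ℝ → ℝ) (hφcont : ContinuousOn φ₀ Q)
    (m₀ : ℝ) (hmin : ∀ a ∈ Q, m₀ ≤ φ₀ a)
    (hm₀ : m₀ < 0)
    (τstar : ℝ) (hτstar : τstar = -1 / m₀)
    (F : ℝ → ℝ)
    (hF : ∀ τ ∈ Set.Ico 0 τstar, F τ = (1 / L ^ 2) * ∫ a in Q, 1 / (1 + τ * φ₀ a))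
    (T : ℝ → ℝ)
    (hT : ∀ τ ∈ Set.Ico 0 τstar,
      T τ = (1 / L ^ 4) * ∫ a in Q, ∫ b in Q,
        (if φ₀ a ≠ φ₀ b then
          Real.log ((1 + τ * φ₀ a) / (1 + τ * φ₀ b)) / (φ₀ a - φ₀ b)
        else τ / (1 + τ * φ₀ a))) :
    T 0 = 0 ∧
    ∀ τ ∈ Set.Ico 0 τstar, HasDerivWithinAt T ((F τ) ^ 2) (Set.Ico 0 τstar) τ := by
  subst hQ hτstar
  set μ : Measure (ℝ × ℝ) := volume.restrict (Icc (0, 0) (L, L))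
  have : IsFiniteMeasure μ := isFiniteMeasure_restrict.2 measure_Icc_lt_top.ne
  have hφ : AEStronglyMeasurable φ₀ μ := hφcont.aestronglyMeasurable measurableSet_Icc
  have hm : ∀ᵐ a ∂μ, m₀ ≤ φ₀ a := (ae_restrict_iff' measurableSet_Icc).2 (.of_forall hmin)
  have hTI : ∀ τ ∈ Ico 0 (-1 / m₀),
      T τ = 1 / L ^ 4 * ∫ s in (0 : ℝ)..τ, resolventIntegral μ φ₀ s ^ 2 := fun τ hτ => by
    rw [hT τ hτ]
    exact congrArg _ (integral_integral_timeChangeKernel hφ hm hm₀.le hτ.1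
      (one_add_mul_pos_of_lt_neg_one_div hm₀ hτ.2))
  refine ⟨by simpa using hTI 0 ⟨le_rfl, div_pos_of_neg_of_neg (by norm_num) hm₀⟩,
    fun τ hτ => ?_⟩
  have hderiv := (((continuousOn_resolventIntegral_Ico hφ hm hm₀).pow 2)
    |>.hasDerivWithinAt_integral_Ico hτ).const_mul (1 / L ^ 4)
  refine (hderiv.congr hTI (hTI τ hτ)).congr_deriv ?_
  simp only [hF τ hτ, Pi.pow_apply, resolventIntegral, one_div]
  ring

/-- The time-change function `T` satisfies `T(0) = 0` and is differentiable on
`[0,τ*)` with `T'(τ) = F(τ)²`. -/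
theorem stmt_4
    (L : ℝ) (hL : 0 < L)
    (Q : Set (ℝ × ℝ)) (hQ : Q = Set.Icc (0, 0) (L, L))
    (φ₀ : ℝ × ℝ → ℝ) (hφcont : ContinuousOn φ₀ Q)
    (hmean : ∫ a in Q, φ₀ a = 0)
    (m₀ : ℝ) (hmin : ∀ a ∈ Q, m₀ ≤ φ₀ a) (hatt : ∃ a ∈ Q, φ₀ a = m₀)
    (hm₀ : m₀ < 0)
    (τstar : ℝ) (hτstar : τstar = -1 / m₀)
    (F : ℝ → ℝ)
    (hF : ∀ τ ∈ Set.Ico 0 τstar, F τ = (1 / L ^ 2) * ∫ a in Q, 1 / (1 + τ * φ₀ a))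
    (T : ℝ → ℝ)
    (hT : ∀ τ ∈ Set.Ico 0 τstar,
      T τ = (1 / L ^ 4) * ∫ a in Q, ∫ b in Q,
        (if φ₀ a ≠ φ₀ b then
          Real.log ((1 + τ * φ₀ a) / (1 + τ * φ₀ b)) / (φ₀ a - φ₀ b)
        else τ / (1 + τ * φ₀ a))) :
    T 0 = 0 ∧
    ∀ τ ∈ Set.Ico 0 τstar, HasDerivWithinAt T ((F τ) ^ 2) (Set.Ico 0 τstar) τ :=
  stmt_4_general L Q hQ φ₀ hφcont m₀ hmin hm₀ τstar hτstar F hF T hT
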